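/- Let ℓ ≥ 1, k ≥ 0, 1 ≤ p ≤ ℓ, and let μ = (c_1, ..., c_n) be integers with ℓ ≥ c_1 ≥ c_2 ≥ ... ≥ c_n ≥ 0, Σ_{i=1}^n c_i = 2(kℓ + p), and Σ_{i=2k+2}^n c_i = p. Let T be the unique semistandard Young tableau of shape ϱ = (ℓ^{2k}, p, p) with content μ. Then: (a) for every column j with 1 ≤ j ≤ p, T(i, j) = i for all 1 ≤ i ≤ 2k+1, and T(2k+2, j) ≥ 2k+2; (b) for every column j with p < j ≤ ℓ, the 2k entries T(1, j), ..., T(2k, j) are 2k distinct elements of {1, 2, ..., 2k+1} (i.e., exactly one element of {1, ..., 2k+1} is missing from column j). -/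

import Mathlib

/-!
Entries in row `a` of a semistandard tableau are at least `a`, so the `p` boxes of the last
row `2k+2` all carry entries `≥ 2k+2`. The content assumption says there are only `p` such
entries, hence every box in rows `1, …, 2k+1` carries an entry `≤ 2k+1`. Strictly increasing
columns of length `2k+1` (resp. `2k`) with entries in `{1, …, 2k+1}` then give both claims.
-/

/-- `IsSSYT R C r n c T` : the filling `T` (entry `T a b` in row `a`, column `b`,
both 1-indexed) is a semistandard Young tableau of the shape whose `a`-th row
(for `1 ≤ a ≤ R`) consists of the boxes `(a, b)` with `1 ≤ b ≤ r a` (where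
`r a ≤ C`), with entries in `{1, ..., n}`, rows weakly increasing, columns
strictly increasing, and using exactly `c i` entries equal to `i` for each
`1 ≤ i ≤ n`. -/
def IsSSYT (R C : ℕ) (r : ℕ → ℕ) (n : ℕ) (c : ℕ → ℕ) (T : ℕ → ℕ → ℕ) : Prop :=
  (∀ a ∈ Finset.Icc 1 R, ∀ b ∈ Finset.Icc 1 (r a), 1 ≤ T a b ∧ T a b ≤ n) ∧
  (∀ a ∈ Finset.Icc 1 R, ∀ b b' : ℕ, 1 ≤ b → b ≤ b' → b' ≤ r a → T a b ≤ T a b') ∧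
  (∀ a : ℕ, 1 ≤ a → a + 1 ≤ R → ∀ b : ℕ, 1 ≤ b → b ≤ r a → b ≤ r (a + 1) →
    T a b < T (a + 1) b) ∧
  (∀ i : ℕ, 1 ≤ i → i ≤ n →
    ((Finset.Icc 1 R ×ˢ Finset.Icc 1 C).filter
      (fun q => q.2 ≤ r q.1 ∧ T q.1 q.2 = i)).card = c i)

/-- Row lengths of the shape `ϱ = (ℓ^{2k}, p, p)`: rows `1, ..., 2k` have length `ℓ`
and rows `2k+1`, `2k+2` have length `p`. -/
def rhoRow (l k p : ℕ) (a : ℕ) : ℕ := if a ≤ 2 * k then l else p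

/-- A semistandard Young tableau of shape `ϱ = (ℓ^{2k}, p, p)` with content
`(c 1, ..., c n)`. -/
def IsRhoSSYT (l k p n : ℕ) (c : ℕ → ℕ) (T : ℕ → ℕ → ℕ) : Prop :=
  IsSSYT (2 * k + 2) l (rhoRow l k p) n c T

/-- A tableau of shape `ϱ = (ℓ^{2k}, p, p)` is proper if `T (q+2) 1 ≥ T q ℓ`
for all `1 ≤ q ≤ 2k`. -/
def IsProper (l k : ℕ) (T : ℕ → ℕ → ℕ) : Prop :=
  ∀ q : ℕ, 1 ≤ q → q ≤ 2 * k → T q l ≤ T (q + 2) 1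

/-- Two fillings agree on every box of the shape with row lengths `r` and `R` rows. -/
def EqOnShape (R : ℕ) (r : ℕ → ℕ) (T T' : ℕ → ℕ → ℕ) : Prop :=
  ∀ a ∈ Finset.Icc 1 R, ∀ b ∈ Finset.Icc 1 (r a), T a b = T' a b

/-- The content `(c 1, ..., c n)` is `ℓ`-maximal if at least `n - 3` of the
amounts `c i` equal `ℓ`. -/
def IsMaximal (l n : ℕ) (c : ℕ → ℕ) : Prop :=
  n - 3 ≤ ((Finset.Icc 1 n).filter (fun i => c i = l)).card

/-- A filling is normalized if it vanishes outside the boxes of the shape. -/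
def Normalized (R : ℕ) (r : ℕ → ℕ) (T : ℕ → ℕ → ℕ) : Prop :=
  ∀ a b : ℕ, ¬ (1 ≤ a ∧ a ≤ R ∧ 1 ≤ b ∧ b ≤ r a) → T a b = 0

open Finset

def shapeBoxes (R C : ℕ) (r : ℕ → ℕ) : Finset (ℕ × ℕ) :=
  (Icc 1 R ×ˢ Icc 1 C).filter (fun q => q.2 ≤ r q.1)

namespace IsSSYT

variable {R C n : ℕ} {r : ℕ → ℕ} {c : ℕ → ℕ} {T : ℕ → ℕ → ℕ}

theorem add_le_entry_add (hT : IsSSYT R C r n c T) (hr : Antitone r) (d : ℕ) {a b : ℕ}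
    (ha : 1 ≤ a) (haR : a + d ≤ R) (hb : 1 ≤ b) (hbr : b ≤ r (a + d)) :
    T a b + d ≤ T (a + d) b := by
  induction d with
  | zero => simp
  | succ d ih =>
    have hbr' : b ≤ r (a + d) := hbr.trans (hr (by omega))
    have hstep := hT.2.2.1 (a + d) (by omega) (by omega) b hb hbr' hbr
    have := ih (by omega) hbr'
    show T a b + (d + 1) ≤ T (a + d + 1) b
    omega

theorem le_entry (hT : IsSSYT R C r n c T) (hr : Antitone r) {a b : ℕ}
    (ha : 1 ≤ a) (haR : a ≤ R) (hb : 1 ≤ b) (hbr : b ≤ r a) : a ≤ T a b := by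
  obtain ⟨d, rfl⟩ : ∃ d, a = 1 + d := ⟨a - 1, by omega⟩
  have hfirst := (hT.1 1 (mem_Icc.mpr ⟨le_rfl, by omega⟩) b
    (mem_Icc.mpr ⟨hb, hbr.trans (hr (by omega))⟩)).1
  have := hT.add_le_entry_add hr d le_rfl haR hb hbr
  omega

theorem entry_lt_entry (hT : IsSSYT R C r n c T) (hr : Antitone r) {a a' b : ℕ}
    (ha : 1 ≤ a) (haa' : a < a') (haR : a' ≤ R) (hb : 1 ≤ b) (hbr : b ≤ r a') :
    T a b < T a' b := by
  obtain ⟨d, rfl⟩ : ∃ d, a' = a + (d + 1) := ⟨a' - a - 1, by omega⟩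
  have := hT.add_le_entry_add hr (d + 1) ha haR hb hbr
  omega

theorem eq_of_entry_eq (hT : IsSSYT R C r n c T) (hr : Antitone r) {a a' b : ℕ}
    (ha : 1 ≤ a) (haR : a ≤ R) (ha' : 1 ≤ a') (haR' : a' ≤ R) (hb : 1 ≤ b)
    (hbr : b ≤ r a) (hbr' : b ≤ r a') (heq : T a b = T a' b) : a = a' := by
  by_contra hne
  rcases Nat.lt_or_gt_of_ne hne with h | h
  · exact (hT.entry_lt_entry hr ha h haR' hb hbr').ne heq
  · exact (hT.entry_lt_entry hr ha' h haR hb hbr).ne' heq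

theorem card_filter_le_entry (hT : IsSSYT R C r n c T) {m : ℕ} (hm : 1 ≤ m) :
    ((shapeBoxes R C r).filter (fun q => m ≤ T q.1 q.2)).card = ∑ i ∈ Icc m n, c i := by
  rw [card_eq_sum_card_fiberwise (f := fun q => T q.1 q.2) (t := Icc m n)]
  · refine sum_congr rfl fun i hi => ?_
    rw [mem_Icc] at hi
    rw [← hT.2.2.2 i (by omega) hi.2, filter_filter, shapeBoxes, filter_filter]
    congr 1
    ext q
    simp only [mem_filter]
    constructor
    · rintro ⟨hq, hrq, -, rfl⟩
      exact ⟨hq, hrq, rfl⟩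
    · rintro ⟨hq, hrq, rfl⟩
      exact ⟨hq, hrq, hi.1, rfl⟩
  · intro q hq
    simp only [shapeBoxes, mem_coe, mem_filter, mem_product, mem_Icc] at hq
    exact mem_Icc.mpr ⟨hq.2, (hT.1 q.1 (mem_Icc.mpr hq.1.1.1) q.2
      (mem_Icc.mpr ⟨hq.1.1.2.1, hq.1.2⟩)).2⟩

/-- If the number of entries `≥ R` equals the length of the last row `R`, those entries fill
exactly the last row. -/
theorem entry_lt_of_sum_eq (hT : IsSSYT R C r n c T) (hr : Antitone r) (hrC : ∀ a, r a ≤ C)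
    (hsum : ∑ i ∈ Icc R n, c i = r R) {a b : ℕ} (ha : 1 ≤ a) (haR : a < R) (hb : 1 ≤ b)
    (hbr : b ≤ r a) : T a b < R := by
  set large := (shapeBoxes R C r).filter (fun q => R ≤ T q.1 q.2)
  have hlastRow : {R} ×ˢ Icc 1 (r R) ⊆ large := by
    intro q hq
    simp only [mem_product, mem_singleton, mem_Icc] at hq
    obtain ⟨hq1, hq2, hq3⟩ := hq
    have := hT.le_entry hr (a := q.1) (b := q.2) (by omega) (by omega) hq2 (hq1 ▸ hq3)
    simp only [large, shapeBoxes, mem_filter, mem_product, mem_Icc]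
    exact ⟨⟨⟨⟨by omega, by omega⟩, hq2, hq3.trans (hq1 ▸ hrC _)⟩, hq1 ▸ hq3⟩, by omega⟩
  have hlarge : large = {R} ×ˢ Icc 1 (r R) :=
    (eq_of_subset_of_card_le hlastRow (by
      rw [hT.card_filter_le_entry (by omega), hsum, card_product]; simp)).symm
  by_contra hge
  have hmem : (a, b) ∈ large := by
    simp only [large, shapeBoxes, mem_filter, mem_product, mem_Icc]
    exact ⟨⟨⟨⟨ha, haR.le⟩, hb, hbr.trans (hrC a)⟩, hbr⟩, by omega⟩
  rw [hlarge] at hmem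
  simp only [mem_product, mem_singleton] at hmem
  omega

end IsSSYT

theorem rhoRow_antitone {l k p : ℕ} (hpl : p ≤ l) : Antitone (rhoRow l k p) := by
  intro a a' h
  unfold rhoRow
  split_ifs <;> omega

theorem rhoRow_le {l k p : ℕ} (hpl : p ≤ l) (a : ℕ) : rhoRow l k p a ≤ l := by
  unfold rhoRow
  split_ifs <;> omega

theorem le_rhoRow {l k p j : ℕ} (hpl : p ≤ l) (hjp : j ≤ p) (a : ℕ) : j ≤ rhoRow l k p a := by
  unfold rhoRow
  split_ifs <;> omega

theorem rhoRow_of_le {l k p a : ℕ} (ha : a ≤ 2 * k) : rhoRow l k p a = l := if_pos ha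

theorem rhoRow_last {l k p : ℕ} : rhoRow l k p (2 * k + 2) = p := if_neg (by omega)

theorem IsRhoSSYT.entry_le {l k p n : ℕ} {c : ℕ → ℕ} {T : ℕ → ℕ → ℕ}
    (hT : IsRhoSSYT l k p n c T) (hpl : p ≤ l) (hlam : ∑ i ∈ Icc (2 * k + 2) n, c i = p)
    {a b : ℕ} (ha : 1 ≤ a) (hak : a ≤ 2 * k + 1) (hb : 1 ≤ b) (hbr : b ≤ rhoRow l k p a) :
    T a b ≤ 2 * k + 1 :=
  Nat.le_of_lt_succ (IsSSYT.entry_lt_of_sum_eq hT (rhoRow_antitone hpl) (rhoRow_le hpl)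
    (by rw [rhoRow_last, hlam]) ha (by omega) hb hbr)

theorem stmt11_general (l k p n : ℕ) (c : ℕ → ℕ) (T : ℕ → ℕ → ℕ)
    (hpl : p ≤ l)
    (hlam : ∑ i ∈ Finset.Icc (2 * k + 2) n, c i = p)
    (hT : IsRhoSSYT l k p n c T) :
    (∀ j : ℕ, 1 ≤ j → j ≤ p →
      (∀ i : ℕ, 1 ≤ i → i ≤ 2 * k + 1 → T i j = i) ∧ 2 * k + 2 ≤ T (2 * k + 2) j) ∧
    (∀ j : ℕ, p < j → j ≤ l →
      (∀ a : ℕ, 1 ≤ a → a ≤ 2 * k → 1 ≤ T a j ∧ T a j ≤ 2 * k + 1) ∧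
      (∀ a a' : ℕ, 1 ≤ a → a ≤ 2 * k → 1 ≤ a' → a' ≤ 2 * k →
        T a j = T a' j → a = a')) := by
  have hr := rhoRow_antitone (k := k) hpl
  refine ⟨fun j hj hjp => ⟨fun i hi hik => ?_, ?_⟩, fun j hpj hjl => ⟨fun a ha hak => ?_, ?_⟩⟩
  · have hlow := hT.le_entry hr hi (by omega) hj (le_rhoRow hpl hjp i)
    have hcol := hT.add_le_entry_add hr (2 * k + 1 - i) hi (by omega) hj (le_rhoRow hpl hjp _)
    rw [Nat.add_sub_cancel' hik] at hcol
    have := hT.entry_le hpl hlam (a := 2 * k + 1) (by omega) le_rfl hj (le_rhoRow hpl hjp _)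
    omega
  · exact hT.le_entry hr (by omega) le_rfl hj (le_rhoRow hpl hjp _)
  · have hjr : j ≤ rhoRow l k p a := (rhoRow_of_le hak).symm ▸ hjl
    exact ⟨by have := hT.le_entry hr ha (by omega) (by omega) hjr; omega,
      hT.entry_le hpl hlam ha (by omega) (by omega) hjr⟩
  · intro a a' ha hak ha' hak' heq
    exact hT.eq_of_entry_eq hr ha (by omega) ha' (by omega) (by omega)
      ((rhoRow_of_le hak).symm ▸ hjl) ((rhoRow_of_le hak').symm ▸ hjl) heq

/-- Column description of the unique tableau of shape `ϱ = (ℓ^{2k}, p, p)` when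
`Λ = p`: columns `j ≤ p` contain `1, 2, ..., 2k+1` followed by an entry `≥ 2k+2`,
and columns `p < j ≤ ℓ` contain `2k` distinct elements of `{1, ..., 2k+1}`. -/
theorem stmt11 (l k p n : ℕ) (c : ℕ → ℕ) (T : ℕ → ℕ → ℕ)
    (hl : 1 ≤ l) (hp : 1 ≤ p) (hpl : p ≤ l)
    (hbd : ∀ i : ℕ, 1 ≤ i → i ≤ n → c i ≤ l)
    (hmono : ∀ i j : ℕ, 1 ≤ i → i ≤ j → j ≤ n → c j ≤ c i)
    (hsum : ∑ i ∈ Finset.Icc 1 n, c i = 2 * (k * l + p))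
    (hlam : ∑ i ∈ Finset.Icc (2 * k + 2) n, c i = p)
    (hT : IsRhoSSYT l k p n c T) :
    (∀ j : ℕ, 1 ≤ j → j ≤ p →
      (∀ i : ℕ, 1 ≤ i → i ≤ 2 * k + 1 → T i j = i) ∧ 2 * k + 2 ≤ T (2 * k + 2) j) ∧
    (∀ j : ℕ, p < j → j ≤ l →
      (∀ a : ℕ, 1 ≤ a → a ≤ 2 * k → 1 ≤ T a j ∧ T a j ≤ 2 * k + 1) ∧
      (∀ a a' : ℕ, 1 ≤ a → a ≤ 2 * k → 1 ≤ a' → a' ≤ 2 * k →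
        T a j = T a' j → a = a')) :=
  stmt11_general l k p n c T hpl hlam hT
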